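/- arXiv:1301.4183 — 6 statements merged into one kernel-verified Lean document; each statement's English description precedes it below -/
import Mathlib

section
/- Let ℓ : ℝ^p → ℝ be a convex differentiable function, let λ > 0, let J ⊆ {1,…,p} be the set of penalized coordinates, and consider the objective f(θ) = ℓ(θ) + λ · Σ_{j ∈ J} |θ_j|. Suppose θ̂ is a minimizer of f over ℝ^p, and S ⊆ {1,…,p} is a set such that θ̂_j = 0 for every j ∈ J \ S and |∂ℓ/∂θ_j (θ̂)| < λ for every j ∈ J \ S. Then every minimizer θ̃ of f satisfies θ̃_j = 0 for all j ∈ J \ S. -/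
/-!
Write the objective as `ℓ θ + ∑ k, φ k (θ k)` with convex `φ k`. Moving one coordinate of a
minimizer `x` to the value `y k` cannot decrease the objective, so
`φ k (x k) - φ k (y k) ≤ ℓ' (Pi.single k (y k - x k))`, and these bounds sum to
`∑ k, (φ k (x k) - φ k (y k)) ≤ ℓ' (y - x)`. If `y` is another minimizer, the gradient inequality
`ℓ' (y - x) ≤ ℓ y - ℓ x` for convex `ℓ` and equality of the optimal values give the reverse
inequality, so every coordinatewise bound is an equality. At `j ∈ J \ S`, where `x j = 0`, this
equality reads `y j * ∂ⱼℓ(x) = -λ |y j|`, which forces `y j = 0` because `|∂ⱼℓ(x)| < λ`.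
-/

open Finset

section
variable {E : Type*} [NormedAddCommGroup E] [NormedSpace ℝ E] {ℓ : E → ℝ} {ℓ' : E →L[ℝ] ℝ} {x : E}

lemma HasFDerivAt.le_apply_of_forall_mul_le (hℓ : HasFDerivAt ℓ ℓ' x) {v : E} {c : ℝ}
    (h : ∀ t ∈ Set.Ioc (0 : ℝ) 1, c * t ≤ ℓ (x + t • v) - ℓ x) : c ≤ ℓ' v := by
  refine ge_of_tendsto ((hℓ.hasLineDerivAt v).tendsto_slope_zero_right) ?_
  filter_upwards [Ioc_mem_nhdsGT zero_lt_one] with t ht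
  rw [smul_eq_mul, le_inv_mul_iff₀ ht.1, mul_comm]
  exact h t ht

lemma HasFDerivAt.apply_le_of_forall_le_mul (hℓ : HasFDerivAt ℓ ℓ' x) {v : E} {c : ℝ}
    (h : ∀ t ∈ Set.Ioc (0 : ℝ) 1, ℓ (x + t • v) - ℓ x ≤ c * t) : ℓ' v ≤ c := by
  refine le_of_tendsto ((hℓ.hasLineDerivAt v).tendsto_slope_zero_right) ?_
  filter_upwards [Ioc_mem_nhdsGT zero_lt_one] with t ht
  rw [smul_eq_mul, inv_mul_le_iff₀ ht.1, mul_comm]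
  exact h t ht

lemma ConvexOn.apply_add_smul_sub_le {h : E → ℝ} (hh : ConvexOn ℝ Set.univ h) (x y : E) {t : ℝ}
    (ht0 : 0 ≤ t) (ht1 : t ≤ 1) : h (x + t • (y - x)) ≤ h x + t * (h y - h x) := by
  calc h (x + t • (y - x)) = h ((1 - t) • x + t • y) := by congr 1; module
    _ ≤ (1 - t) • h x + t • h y :=
      hh.2 (Set.mem_univ x) (Set.mem_univ y) (sub_nonneg.2 ht1) ht0 (sub_add_cancel 1 t)
    _ = h x + t * (h y - h x) := by simp only [smul_eq_mul]; ring

lemma ConvexOn.hasFDerivAt_apply_sub_le (hconv : ConvexOn ℝ Set.univ ℓ) (hℓ : HasFDerivAt ℓ ℓ' x)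
    (y : E) : ℓ' (y - x) ≤ ℓ y - ℓ x :=
  hℓ.apply_le_of_forall_le_mul fun t ⟨ht0, ht1⟩ => by
    linarith [hconv.apply_add_smul_sub_le x y ht0.le ht1]

lemma HasFDerivAt.sub_le_apply_sub_of_forall_le_add {h : E → ℝ} (hℓ : HasFDerivAt ℓ ℓ' x)
    (hh : ConvexOn ℝ Set.univ h) (hmin : ∀ z, ℓ x + h x ≤ ℓ z + h z) (y : E) :
    h x - h y ≤ ℓ' (y - x) :=
  hℓ.le_apply_of_forall_mul_le fun t ⟨ht0, ht1⟩ => by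
    linarith [hh.apply_add_smul_sub_le x y ht0.le ht1, hmin (x + t • (y - x))]

end

section
variable {ι : Type*} [Fintype ι]

lemma convexOn_sum_apply {φ : ι → ℝ → ℝ} (hφ : ∀ k, ConvexOn ℝ Set.univ (φ k)) :
    ConvexOn ℝ Set.univ (fun θ : ι → ℝ => ∑ k, φ k (θ k)) := by
  refine ⟨convex_univ, fun θ _ η _ a b ha hb hab => ?_⟩
  simp only [smul_eq_mul, mul_sum, ← sum_add_distrib]
  exact sum_le_sum fun k _ => (hφ k).2 (Set.mem_univ _) (Set.mem_univ _) ha hb hab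

variable [DecidableEq ι] {ℓ : (ι → ℝ) → ℝ} {ℓ' : (ι → ℝ) →L[ℝ] ℝ} {φ : ι → ℝ → ℝ} {x y : ι → ℝ}

lemma sum_sub_sum_add_single (φ : ι → ℝ → ℝ) (x : ι → ℝ) (k : ι) (d : ℝ) :
    ∑ i, φ i (x i) - ∑ i, φ i ((x + Pi.single k d : ι → ℝ) i) = φ k (x k) - φ k (x k + d) := by
  rw [← sum_sub_distrib, Fintype.sum_eq_single k fun i hi => by simp [Pi.single_eq_of_ne hi]]
  simp

lemma HasFDerivAt.sub_le_apply_single_of_forall_le_add_sum (hℓ : HasFDerivAt ℓ ℓ' x)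
    (hφ : ∀ k, ConvexOn ℝ Set.univ (φ k))
    (hmin : ∀ z, ℓ x + ∑ k, φ k (x k) ≤ ℓ z + ∑ k, φ k (z k)) (k : ι) (s : ℝ) :
    φ k (x k) - φ k s ≤ ℓ' (Pi.single k (s - x k)) := by
  have := hℓ.sub_le_apply_sub_of_forall_le_add (convexOn_sum_apply hφ) hmin
    (x + Pi.single k (s - x k))
  rwa [sum_sub_sum_add_single, add_sub_cancel, add_sub_cancel_left] at this

lemma ConvexOn.apply_single_sub_eq_of_forall_le_add_sum (hconv : ConvexOn ℝ Set.univ ℓ)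
    (hℓ : HasFDerivAt ℓ ℓ' x) (hφ : ∀ k, ConvexOn ℝ Set.univ (φ k))
    (hx : ∀ z, ℓ x + ∑ k, φ k (x k) ≤ ℓ z + ∑ k, φ k (z k))
    (hy : ℓ y + ∑ k, φ k (y k) ≤ ℓ x + ∑ k, φ k (x k)) (k : ι) :
    ℓ' (Pi.single k (y k - x k)) = φ k (x k) - φ k (y k) := by
  set gap : ι → ℝ := fun i => ℓ' (Pi.single i (y i - x i)) - (φ i (x i) - φ i (y i))
  have gap_nonneg : ∀ i ∈ univ, 0 ≤ gap i := fun i _ =>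
    sub_nonneg.2 (hℓ.sub_le_apply_single_of_forall_le_add_sum hφ hx i (y i))
  have sum_gap : ∑ i, gap i = ℓ' (y - x) - (∑ i, φ i (x i) - ∑ i, φ i (y i)) := by
    simp only [gap, sum_sub_distrib, ← map_sum, univ_sum_single]
    rfl
  have sum_gap_nonpos : ∑ i, gap i ≤ 0 := by
    linarith [hconv.hasFDerivAt_apply_sub_le hℓ y]
  have gap_eq_zero := (sum_eq_zero_iff_of_nonneg gap_nonneg).1
    (le_antisymm sum_gap_nonpos (sum_nonneg gap_nonneg))
  exact sub_eq_zero.1 (gap_eq_zero k (mem_univ k))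

end

lemma eq_zero_of_mul_eq_neg_mul_abs {a g c : ℝ} (hg : |g| < c) (h : a * g = -(c * |a|)) :
    a = 0 := by
  by_contra ha
  have : -(|a| * |g|) ≤ a * g := by rw [← abs_mul]; exact neg_abs_le _
  nlinarith [abs_pos.2 ha]

/-- Support-sharing lemma for ℓ1-regularized M-estimation: if `θh` is a minimizer
of `f θ = ℓ θ + λ * Σ_{j ∈ J} |θ j|`, with `θh j = 0` and `|∂ℓ/∂θ_j (θh)| < λ`
for every penalized coordinate `j ∈ J \ S`, then every minimizer of `f`
vanishes on `J \ S`. -/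
theorem support_sharing {p : ℕ} (ℓ : (Fin p → ℝ) → ℝ)
    (hconv : ConvexOn ℝ Set.univ ℓ) (hdiff : Differentiable ℝ ℓ)
    (lam : ℝ) (hlam : 0 < lam) (J : Finset (Fin p)) (S : Finset (Fin p))
    (f : (Fin p → ℝ) → ℝ)
    (hf : ∀ θ, f θ = ℓ θ + lam * ∑ j ∈ J, |θ j|)
    (θh : Fin p → ℝ) (hθh : ∀ θ, f θh ≤ f θ)
    (hzero : ∀ j ∈ J, j ∉ S → θh j = 0)
    (hgrad : ∀ j ∈ J, j ∉ S → |fderiv ℝ ℓ θh (Pi.single j 1)| < lam) :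
    ∀ θt : Fin p → ℝ, (∀ θ, f θt ≤ f θ) → ∀ j ∈ J, j ∉ S → θt j = 0 := by
  intro θt hθt j hjJ hjS
  set φ : Fin p → ℝ → ℝ := fun k t => if k ∈ J then lam * |t| else 0
  have hφ : ∀ k, ConvexOn ℝ Set.univ (φ k) := fun k => by
    by_cases hk : k ∈ J
    · simp only [φ, hk, if_true]
      exact (convexOn_norm convex_univ).smul hlam.le
    · simpa only [φ, hk, if_false] using convexOn_const (0 : ℝ) convex_univ
  have hfφ : ∀ θ, f θ = ℓ θ + ∑ k, φ k (θ k) := fun θ => by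
    rw [hf, mul_sum, ← sum_filter, filter_mem_eq_inter, Finset.univ_inter]
  have key := hconv.apply_single_sub_eq_of_forall_le_add_sum (hdiff θh).hasFDerivAt hφ
    (by simpa only [hfφ] using hθh) (by simpa only [hfφ] using hθt θh) j
  have hdir : fderiv ℝ ℓ θh (Pi.single j (θt j)) = θt j * fderiv ℝ ℓ θh (Pi.single j 1) := by
    rw [← smul_eq_mul, ← map_smul, ← Pi.single_smul, smul_eq_mul, mul_one]
  simp only [hzero j hjJ hjS, sub_zero, hdir, φ, hjJ, if_true, abs_zero, mul_zero, zero_sub]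
    at key
  exact eq_zero_of_mul_eq_neg_mul_abs (hgrad j hjJ hjS) key
end

section
/- Let Q ∈ ℝ^{p×p}, let S ⊊ {1,…,p} be nonempty with Q_{SS} (the submatrix of Q with rows and columns in S) invertible, and suppose there is α ∈ (0,1] such that max_{t ∉ S} ‖Q_{tS} (Q_{SS})^{-1}‖_1 ≤ 1 − α, where Q_{tS} is the row-t, columns-S subvector. Let λ > 0 and let θ̂, θ*, Ẑ, W, R ∈ ℝ^p satisfy: θ̂_j = θ*_j = 0 for all j ∉ S, ‖Ẑ_S‖_∞ ≤ 1, and Q(θ̂ − θ*) = −λ Ẑ + W + R. Then ‖Ẑ_{S^c}‖_∞ ≤ (1 − α) + (2 − α)(‖W‖_∞ + ‖R‖_∞)/λ. In particular, if additionally ‖W‖_∞ ≤ (α/(4(2−α))) λ and ‖R‖_∞ ≤ (α/(4(2−α))) λ, then ‖Ẑ_{S^c}‖_∞ ≤ 1 − α/2 < 1. -/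
open Finset

/-- Strict dual feasibility step of the primal-dual witness argument. -/
theorem strict_dual_feasibility {p : ℕ} (Q : Matrix (Fin p) (Fin p) ℝ)
    (S : Finset (Fin p)) (hS : S.Nonempty) (hSproper : S ≠ Finset.univ)
    (QSS : Matrix S S ℝ) (hQSS : ∀ i j : S, QSS i j = Q i j)
    (hinv : IsUnit QSS.det)
    (α : ℝ) (hα : α ∈ Set.Ioc (0 : ℝ) 1)
    (hincoh : ∀ t ∉ S, ∑ j : S, |∑ k : S, Q t k * (QSS⁻¹) k j| ≤ 1 - α)
    (lam : ℝ) (hlam : 0 < lam)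
    (θh θs Z W R : Fin p → ℝ)
    (hsupp : ∀ j ∉ S, θh j = 0 ∧ θs j = 0)
    (hZS : ∀ j ∈ S, |Z j| ≤ 1)
    (heq : Q.mulVec (θh - θs) = (-lam) • Z + W + R) :
    (∀ t ∉ S, |Z t| ≤ (1 - α) + (2 - α) * (‖W‖ + ‖R‖) / lam) ∧
    ((‖W‖ ≤ α / (4 * (2 - α)) * lam) → (‖R‖ ≤ α / (4 * (2 - α)) * lam) →
      (∀ t ∉ S, |Z t| ≤ 1 - α / 2) ∧ 1 - α / 2 < 1) := by
  obtain ⟨hα0, hα1⟩ := hα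
  set v : Fin p → ℝ := (-lam) • Z + W + R with hv
  have hΔ0 : ∀ k, k ∉ S → (θh - θs) k = 0 := by
    intro k hk; obtain ⟨h1, h2⟩ := hsupp k hk; simp [h1, h2]
  -- each row of the equation reduces to a sum over S
  have hrowAll : ∀ i : Fin p, ∑ k : S, Q i (k : Fin p) * (θh - θs) (k : Fin p) = v i := by
    intro i
    have h1 : ∑ k : Fin p, Q i k * (θh - θs) k = v i := by
      have := congrFun heq i
      simp only [Matrix.mulVec, dotProduct] at this
      exact this
    have h2 : ∑ k ∈ S, Q i k * (θh - θs) k = ∑ k : Fin p, Q i k * (θh - θs) k := by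
      apply Finset.sum_subset (Finset.subset_univ S)
      intro k _ hk
      rw [hΔ0 k hk, mul_zero]
    rw [Finset.sum_coe_sort S (fun k => Q i k * (θh - θs) k), h2, h1]
  set ΔS : S → ℝ := fun k => (θh - θs) (k : Fin p) with hΔS
  set vS : S → ℝ := fun i => v (i : Fin p) with hvS
  have hrow : QSS.mulVec ΔS = vS := by
    funext i
    simp only [Matrix.mulVec, dotProduct]
    calc ∑ j : S, QSS i j * ΔS j = ∑ j : S, Q (i : Fin p) (j : Fin p) * (θh - θs) (j : Fin p) := by
          apply Finset.sum_congr rfl; intro j _; rw [hQSS]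
      _ = v (i : Fin p) := hrowAll i
  have hsolve : ΔS = (QSS⁻¹).mulVec vS := by
    rw [← hrow, Matrix.mulVec_mulVec, Matrix.nonsing_inv_mul QSS hinv, Matrix.one_mulVec]
  have hΔval : ∀ j : S, (θh - θs) (j : Fin p) = ∑ k : S, (QSS⁻¹) j k * v (k : Fin p) := by
    intro j
    have := congrFun hsolve j
    simp only [Matrix.mulVec, dotProduct] at this
    exact this
  -- bound on |v j| for j ∈ S
  set M : ℝ := lam + ‖W‖ + ‖R‖ with hM
  have hWn : ∀ i : Fin p, |W i| ≤ ‖W‖ := fun i => by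
    simpa using norm_le_pi_norm W i
  have hRn : ∀ i : Fin p, |R i| ≤ ‖R‖ := fun i => by
    simpa using norm_le_pi_norm R i
  have hvb : ∀ j : S, |v (j : Fin p)| ≤ M := by
    intro j
    have hz := hZS j j.2
    have : v (j : Fin p) = -lam * Z j + W j + R j := by simp [hv, mul_comm]
    rw [this]
    have h1 : |(-lam) * Z (j : Fin p)| ≤ lam := by
      rw [abs_mul, abs_neg, abs_of_pos hlam]
      nlinarith [abs_nonneg (Z (j : Fin p))]
    calc |(-lam) * Z j + W j + R j| ≤ |(-lam) * Z j| + |W (j:Fin p)| + |R (j:Fin p)| := by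
          exact (abs_add_le _ _).trans (by gcongr; exact abs_add_le _ _)
      _ ≤ lam + ‖W‖ + ‖R‖ := by gcongr; exact hWn j; exact hRn j
  -- main bound: for t ∉ S, lam * |Z t| ≤ (1-α)*lam + (2-α)*(‖W‖+‖R‖)
  have hmain : ∀ t ∉ S, lam * |Z t| ≤ (1 - α) * lam + (2 - α) * (‖W‖ + ‖R‖) := by
    intro t ht
    have hvt : v t = ∑ j : S, (∑ k : S, Q t (k : Fin p) * (QSS⁻¹) k j) * v (j : Fin p) := by
      rw [← hrowAll t]
      calc ∑ k : S, Q t (k:Fin p) * (θh - θs) (k:Fin p)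
          = ∑ k : S, Q t (k:Fin p) * ∑ j : S, (QSS⁻¹) k j * v (j:Fin p) := by
            apply Finset.sum_congr rfl; intro k _; rw [hΔval k]
        _ = ∑ k : S, ∑ j : S, Q t (k:Fin p) * (QSS⁻¹) k j * v (j:Fin p) := by
            apply Finset.sum_congr rfl; intro k _
            rw [Finset.mul_sum]; apply Finset.sum_congr rfl; intro j _; ring
        _ = ∑ j : S, (∑ k : S, Q t (k:Fin p) * (QSS⁻¹) k j) * v (j:Fin p) := by
            rw [Finset.sum_comm]
            apply Finset.sum_congr rfl; intro j _
            rw [Finset.sum_mul]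
    have hvt_bound : |v t| ≤ (1 - α) * M := by
      rw [hvt]
      calc |∑ j : S, (∑ k : S, Q t (k:Fin p) * (QSS⁻¹) k j) * v (j:Fin p)|
          ≤ ∑ j : S, |(∑ k : S, Q t (k:Fin p) * (QSS⁻¹) k j) * v (j:Fin p)| :=
            Finset.abs_sum_le_sum_abs _ _
        _ ≤ ∑ j : S, |∑ k : S, Q t (k:Fin p) * (QSS⁻¹) k j| * M := by
            apply Finset.sum_le_sum; intro j _
            rw [abs_mul]
            exact mul_le_mul_of_nonneg_left (hvb j) (abs_nonneg _)
        _ = (∑ j : S, |∑ k : S, Q t (k:Fin p) * (QSS⁻¹) k j|) * M := by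
            rw [Finset.sum_mul]
        _ ≤ (1 - α) * M := by
            have hM0 : 0 ≤ M := by
              have := norm_nonneg W; have := norm_nonneg R
              simp only [hM]; linarith
            exact mul_le_mul_of_nonneg_right (hincoh t ht) hM0
    have hlz : lam * Z t = W t + R t - v t := by
      have : v t = -lam * Z t + W t + R t := by simp [hv, mul_comm]
      linarith [this]
    have : lam * |Z t| = |lam * Z t| := by
      rw [abs_mul, abs_of_pos hlam]
    rw [this, hlz]
    calc |W t + R t - v t| ≤ |W t| + |R t| + |v t| := by
          exact (abs_sub _ _).trans (by gcongr; exact abs_add_le _ _)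
      _ ≤ ‖W‖ + ‖R‖ + (1 - α) * M := by gcongr; exact hWn t; exact hRn t
      _ = (1 - α) * lam + (2 - α) * (‖W‖ + ‖R‖) := by simp only [hM]; ring
  have hfirst : ∀ t ∉ S, |Z t| ≤ (1 - α) + (2 - α) * (‖W‖ + ‖R‖) / lam := by
    intro t ht
    have h := hmain t ht
    calc |Z t| ≤ ((1 - α) * lam + (2 - α) * (‖W‖ + ‖R‖)) / lam := by
          rw [le_div_iff₀ hlam]; nlinarith [h]
      _ = (1 - α) + (2 - α) * (‖W‖ + ‖R‖) / lam := by
          field_simp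
  refine ⟨hfirst, fun hW hR => ⟨fun t ht => ?_, by linarith⟩⟩
  have h := hmain t ht
  have h2α : (0:ℝ) < 2 - α := by linarith
  have key : α / (4 * (2 - α)) * lam * (2 - α) = α / 4 * lam := by
    field_simp
  have hsum : (2 - α) * (‖W‖ + ‖R‖) ≤ α / 2 * lam := by nlinarith [hW, hR]
  have : lam * |Z t| ≤ (1 - α / 2) * lam := by nlinarith
  nlinarith [this]
end

section
/- Let p ≥ 2, let (θ_s)_{s=1}^p be real numbers and (θ_{st})_{1 ≤ s < t ≤ p} be real numbers. Then the series Σ_{x ∈ ℕ^p} exp( Σ_{s=1}^p θ_s x_s + Σ_{1 ≤ s < t ≤ p} θ_{st} x_s x_t − Σ_{s=1}^p log(x_s!) ) converges (i.e. the Poisson graphical model log-partition function A(θ) is finite) if and only if θ_{st} ≤ 0 for all 1 ≤ s < t ≤ p. -/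
/-!
If some `θ_{st} > 0`, restrict the sum to the configurations `x_s = x_t = n`, all other
coordinates `0`: their exponent `(θ_s + θ_t) n + θ_{st} n² - 2 log n!` tends to `+∞`, because
`log n! ≤ n log n = o(n²)`, so the terms do not even tend to `0`. If all `θ_{st} ≤ 0`, each
term is bounded by `∏_s e^{θ_s x_s} / x_s!`, a product of summable nonnegative sequences in
the separate coordinates, which is summable on `ℕ^p`.
-/

open Finset Filter Nat

theorem summable_prod_of_nonneg_of_summable {ι α : Type*} [Fintype ι] {f : ι → α → ℝ}
    (hf₀ : ∀ i a, 0 ≤ f i a) (hf : ∀ i, Summable (f i)) :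
    Summable fun x : ι → α => ∏ i, f i (x i) := by
  suffices h : ∀ n (g : Fin n → α → ℝ), (∀ i a, 0 ≤ g i a) → (∀ i, Summable (g i)) →
      Summable fun x : Fin n → α => ∏ i, g i (x i) by
    let e := Fintype.equivFin ι
    rw [← (e.arrowCongr (Equiv.refl α)).symm.summable_iff]
    convert h _ (fun i => f (e.symm i)) (fun i => hf₀ _) (fun i => hf _) using 2 with x
    simpa using e.prod_comp fun j => f (e.symm j) (x j)
  intro n
  induction n with
  | zero => intros; exact summable_of_hasFiniteSupport (Set.toFinite _)
  | succ n ih =>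
    intro g hg₀ hg
    have h := (hg 0).mul_of_nonneg (ih (fun i => g i.succ) (fun i => hg₀ _) (fun i => hg _))
      (hg₀ 0) (fun x => prod_nonneg fun i _ => hg₀ _ _)
    rw [← (Fin.consEquiv fun _ => α).summable_iff]
    convert h using 2 with x
    simp [Fin.prod_univ_succ]

theorem Real.log_factorial_le_mul_log (n : ℕ) : Real.log n ! ≤ n * Real.log n := by
  rw [← Real.log_pow]
  exact Real.log_le_log (by positivity) (by exact_mod_cast n.factorial_le_pow)

theorem tendsto_mul_add_mul_sq_sub_mul_log_factorial_atTop (a b : ℝ) {c : ℝ} (hc : 0 < c) :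
    Tendsto (fun n : ℕ => a * n + c * n ^ 2 - b * Real.log n !) atTop atTop := by
  have hlog : ∀ᶠ n : ℕ in atTop, |b| * Real.log n ≤ c / 2 * n := by
    have hε : 0 < c / (2 * (|b| + 1)) := by positivity
    filter_upwards [Real.isLittleO_log_id_atTop.natCast_atTop.def hε, eventually_ge_atTop 1]
      with n hn hn1
    have hlog₀ : 0 ≤ Real.log n := Real.log_nonneg (by exact_mod_cast hn1)
    rw [Real.norm_of_nonneg hlog₀, id, Real.norm_natCast] at hn
    calc |b| * Real.log n ≤ (|b| + 1) * Real.log n := by nlinarith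
      _ ≤ (|b| + 1) * (c / (2 * (|b| + 1)) * n) := by gcongr
      _ = c / 2 * n := by field_simp
  have hlower : ∀ᶠ n : ℕ in atTop,
      n * (a + c / 2 * n) ≤ a * n + c * n ^ 2 - b * Real.log n ! := by
    filter_upwards [hlog] with n hn
    have hfac : b * Real.log n ! ≤ n * (|b| * Real.log n) := calc
      b * Real.log n ! ≤ |b| * Real.log n ! :=
        mul_le_mul_of_nonneg_right (le_abs_self b)
          (Real.log_nonneg (by exact_mod_cast n.factorial_pos))
      _ ≤ |b| * (n * Real.log n) :=
        mul_le_mul_of_nonneg_left (Real.log_factorial_le_mul_log n) (abs_nonneg b)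
      _ = n * (|b| * Real.log n) := by ring
    have := mul_le_mul_of_nonneg_left hn n.cast_nonneg
    linarith
  refine tendsto_atTop_mono' _ hlower ?_
  exact tendsto_natCast_atTop_atTop.atTop_mul_atTop₀ (tendsto_atTop_add_const_left _ _
    (tendsto_natCast_atTop_atTop.const_mul_atTop (by positivity)))

theorem exp_sum_mul_sub_log_factorial {ι : Type*} [Fintype ι] (θ : ι → ℝ) (x : ι → ℕ) :
    Real.exp (∑ s, (θ s * x s - Real.log (x s)!)) = ∏ s, Real.exp (θ s) ^ x s / (x s)! := by
  rw [Real.exp_sum]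
  refine prod_congr rfl fun s _ => ?_
  rw [Real.exp_sub, Real.exp_log (by positivity), mul_comm, Real.exp_nat_mul]

section PoissonEnergy

variable {ι : Type*} [Fintype ι] [LinearOrder ι] [LocallyFiniteOrderTop ι]

noncomputable def poissonEnergy (θ : ι → ℝ) (θ₂ : ι → ι → ℝ) (x : ι → ℕ) : ℝ :=
  ∑ s, θ s * (x s : ℝ) + ∑ s, ∑ t ∈ Ioi s, θ₂ s t * (x s : ℝ) * (x t : ℝ) -
    ∑ s, Real.log (x s)!

variable {θ : ι → ℝ} {θ₂ : ι → ι → ℝ}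

theorem poissonEnergy_le_of_nonpos (hθ₂ : ∀ s t, s < t → θ₂ s t ≤ 0) (x : ι → ℕ) :
    poissonEnergy θ θ₂ x ≤ ∑ s, (θ s * x s - Real.log (x s)!) := by
  have hpair : ∑ s, ∑ t ∈ Ioi s, θ₂ s t * (x s : ℝ) * (x t : ℝ) ≤ 0 :=
    sum_nonpos fun s _ => sum_nonpos fun t ht =>
      mul_nonpos_of_nonpos_of_nonneg
        (mul_nonpos_of_nonpos_of_nonneg (hθ₂ s t (mem_Ioi.mp ht)) (x s).cast_nonneg)
        (x t).cast_nonneg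
  rw [poissonEnergy, sum_sub_distrib]
  linarith

theorem summable_exp_poissonEnergy (hθ₂ : ∀ s t, s < t → θ₂ s t ≤ 0) :
    Summable fun x => Real.exp (poissonEnergy θ θ₂ x) := by
  have hprod : Summable fun x : ι → ℕ => ∏ s, Real.exp (θ s) ^ x s / (x s)! :=
    summable_prod_of_nonneg_of_summable (f := fun s m => Real.exp (θ s) ^ m / m !)
      (fun _ _ => by positivity) fun s => Real.summable_pow_div_factorial _
  refine hprod.of_nonneg_of_le (fun _ => (Real.exp_pos _).le) fun x => ?_
  rw [← exp_sum_mul_sub_log_factorial]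
  exact Real.exp_le_exp.mpr (poissonEnergy_le_of_nonpos hθ₂ x)

theorem poissonEnergy_indicator_pair {s t : ι} (hst : s < t) (n : ℕ) :
    poissonEnergy θ θ₂ (({s, t} : Set ι).indicator fun _ => n) =
      (θ s + θ t) * n + θ₂ s t * n ^ 2 - 2 * Real.log n ! := by
  set x : ι → ℕ := ({s, t} : Set ι).indicator fun _ => n
  have hxs : x s = n := Set.indicator_of_mem (by simp) _
  have hxt : x t = n := Set.indicator_of_mem (by simp) _
  have hx : ∀ u, u ≠ s ∧ u ≠ t → x u = 0 := fun u hu => Set.indicator_of_notMem (by simpa) _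
  have hlin : ∑ u, θ u * (x u : ℝ) = (θ s + θ t) * n := by
    rw [Fintype.sum_eq_add s t hst.ne fun u hu => by simp [hx u hu], hxs, hxt]
    ring
  have hquad : ∑ u, ∑ v ∈ Ioi u, θ₂ u v * (x u : ℝ) * (x v : ℝ) = θ₂ s t * n ^ 2 := by
    rw [Fintype.sum_eq_add s t hst.ne fun u hu => by simp [hx u hu],
      sum_eq_single_of_mem t (mem_Ioi.mpr hst) fun v hv hvt => by
        simp [hx v ⟨(mem_Ioi.mp hv).ne', hvt⟩],
      sum_eq_zero fun v hv => by
        simp [hx v ⟨(hst.trans (mem_Ioi.mp hv)).ne', (mem_Ioi.mp hv).ne'⟩], hxs, hxt]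
    ring
  have hlog : ∑ u, Real.log (x u)! = 2 * Real.log n ! := by
    rw [Fintype.sum_eq_add s t hst.ne fun u hu => by simp [hx u hu], hxs, hxt]
    ring
  rw [poissonEnergy, hlin, hquad, hlog]

theorem not_summable_exp_poissonEnergy {s t : ι} (hst : s < t) (hθ₂ : 0 < θ₂ s t) :
    ¬Summable fun x => Real.exp (poissonEnergy θ θ₂ x) := by
  intro h
  have hinj : Function.Injective fun n : ℕ => ({s, t} : Set ι).indicator fun _ => n :=
    fun m n hmn => by simpa using congrFun hmn s
  have hzero := (h.comp_injective hinj).tendsto_atTop_zero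
  have htop : Tendsto (fun n : ℕ =>
      Real.exp (poissonEnergy θ θ₂ (({s, t} : Set ι).indicator fun _ => n))) atTop atTop := by
    simp only [poissonEnergy_indicator_pair hst]
    exact Real.tendsto_exp_atTop.comp
      (tendsto_mul_add_mul_sq_sub_mul_log_factorial_atTop _ _ hθ₂)
  exact not_tendsto_nhds_of_tendsto_atTop htop 0 hzero

end PoissonEnergy

theorem poisson_graphical_model_normalizable_iff_general
    {p : ℕ} (θ : Fin p → ℝ) (θ₂ : Fin p → Fin p → ℝ) :
    Summable (fun x : Fin p → ℕ =>
      Real.exp (∑ s, θ s * (x s : ℝ) +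
        ∑ s, ∑ t ∈ Finset.Ioi s, θ₂ s t * (x s : ℝ) * (x t : ℝ) -
        ∑ s, Real.log (Nat.factorial (x s)))) ↔
    ∀ s t : Fin p, s < t → θ₂ s t ≤ 0 := by
  show Summable (fun x => Real.exp (poissonEnergy θ θ₂ x)) ↔ _
  refine ⟨fun h s t hst => ?_, summable_exp_poissonEnergy⟩
  by_contra! hpos
  exact not_summable_exp_poissonEnergy hst hpos h

/-- Normalizability of the Poisson graphical model: the partition sum
`Σ_{x ∈ ℕ^p} exp(Σ_s θ_s x_s + Σ_{s<t} θ_{st} x_s x_t - Σ_s log(x_s!))` is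
finite if and only if all pairwise parameters `θ_{st}` (for `s < t`) are
nonpositive. -/
theorem poisson_graphical_model_normalizable_iff
    {p : ℕ} (hp : 2 ≤ p) (θ : Fin p → ℝ) (θ₂ : Fin p → Fin p → ℝ) :
    Summable (fun x : Fin p → ℕ =>
      Real.exp (∑ s, θ s * (x s : ℝ) +
        ∑ s, ∑ t ∈ Finset.Ioi s, θ₂ s t * (x s : ℝ) * (x t : ℝ) -
        ∑ s, Real.log (Nat.factorial (x s)))) ↔
    ∀ s t : Fin p, s < t → θ₂ s t ≤ 0 :=
  poisson_graphical_model_normalizable_iff_general θ θ₂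
end

section
/- Let p ≥ 2, let (θ_s)_{s=1}^p and (θ_{st})_{1 ≤ s < t ≤ p} be real numbers, and consider the integral I = ∫_{[0,∞)^p} exp( −Σ_{s=1}^p θ_s x_s − Σ_{1 ≤ s < t ≤ p} θ_{st} x_s x_t ) dx. (i) If θ_s > 0 for all s and θ_{st} ≥ 0 for all s < t, then I ≤ Π_{s=1}^p (1/θ_s) < ∞. (ii) If θ_{st} < 0 for some pair s < t, then I = +∞. -/
open Finset MeasureTheory Filter
open scoped ENNReal

/-!
If all `θ s > 0` and all `θ₂ s t ≥ 0`, dropping the nonnegative quadratic term bounds the density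
by the product density `∏ s, exp (-θ s * x s)`, whose integral over the orthant factorizes into
`∏ s, 1 / θ s`. If `θ₂ s t < 0` for some `s < t`, integrate over the unit box where `x s` and
`x t` lie in `[M, M + 1]` and all other coordinates in `[0, 1]`: every pair other than `(s, t)`
has a coordinate at most `1`, so on the box the exponent is at least `-θ₂ s t * M ^ 2 - C * (M + 1)`
for a constant `C`, which tends to `+∞` with `M`.
-/

lemma integrableOn_exp_neg_mul_Ici {θ : ℝ} (hθ : 0 < θ) :
    IntegrableOn (fun y ↦ Real.exp (-(θ * y))) (Set.Ici 0) := by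
  rw [integrableOn_Ici_iff_integrableOn_Ioi]
  simpa only [neg_mul] using integrableOn_exp_mul_Ioi (neg_neg_of_pos hθ) 0

lemma integral_exp_neg_mul_Ici {θ : ℝ} (hθ : 0 < θ) :
    ∫ y in Set.Ici 0, Real.exp (-(θ * y)) = 1 / θ := by
  simp_rw [integral_Ici_eq_integral_Ioi, ← neg_mul]
  rw [integral_exp_mul_Ioi (neg_neg_of_pos hθ), mul_zero, Real.exp_zero, div_neg, neg_div,
    neg_neg]

lemma lintegral_pi_ofReal_prod {ι E : Type*} [Fintype ι] [MeasurableSpace E]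
    {μ : ι → Measure E} [∀ i, SigmaFinite (μ i)] {f : ι → E → ℝ}
    (hf : ∀ i, Integrable (f i) (μ i)) (hf₀ : ∀ i y, 0 ≤ f i y) :
    ∫⁻ x, ENNReal.ofReal (∏ i, f i (x i)) ∂Measure.pi μ =
      ENNReal.ofReal (∏ i, ∫ y, f i y ∂μ i) := by
  rw [← integral_fintype_prod_eq_prod, ofReal_integral_eq_lintegral_ofReal
    (Integrable.fintype_prod hf) (ae_of_all _ fun x ↦ prod_nonneg fun i _ ↦ hf₀ i (x i))]

lemma volume_restrict_nonneg_orthant {ι : Type*} [Fintype ι] :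
    (volume : Measure (ι → ℝ)).restrict {x | ∀ i, 0 ≤ x i} =
      Measure.pi fun _ ↦ volume.restrict (Set.Ici 0) := by
  have : {x : ι → ℝ | ∀ i, 0 ≤ x i} = Set.univ.pi fun _ ↦ Set.Ici 0 :=
    Set.ext fun _ ↦ Set.mem_univ_pi.symm
  rw [this, volume_pi, Measure.restrict_pi_pi]

lemma sum_mul_le_sum_abs_mul {α : Type*} {P : Finset α} {g f : α → ℝ} {R : ℝ}
    (hf : ∀ p ∈ P, |f p| ≤ R) : ∑ p ∈ P, g p * f p ≤ (∑ p ∈ P, |g p|) * R := by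
  rw [sum_mul]
  refine sum_le_sum fun p hp ↦ ?_
  calc g p * f p ≤ |g p| * |f p| := (le_abs_self _).trans_eq (abs_mul _ _)
    _ ≤ |g p| * R := mul_le_mul_of_nonneg_left (hf p hp) (abs_nonneg _)

lemma sum_mul_le_mul_add_sum_abs_mul {α : Type*} {P : Finset α} {p₀ : α} (hp₀ : p₀ ∈ P)
    {g f : α → ℝ} {m R : ℝ} (hg₀ : g p₀ ≤ 0) (hm : m ≤ f p₀) (hR : 0 ≤ R)
    (hf : ∀ p ∈ P, p ≠ p₀ → |f p| ≤ R) :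
    ∑ p ∈ P, g p * f p ≤ g p₀ * m + (∑ p ∈ P, |g p|) * R := by
  classical
  have hrest : ∑ p ∈ P.erase p₀, g p * f p ≤ (∑ p ∈ P.erase p₀, |g p|) * R :=
    sum_mul_le_sum_abs_mul fun p hp ↦ hf p (mem_of_mem_erase hp) (ne_of_mem_erase hp)
  rw [← add_sum_erase P _ hp₀, ← add_sum_erase P (fun p ↦ |g p|) hp₀, add_mul]
  nlinarith [mul_le_mul_of_nonpos_left hm hg₀, mul_nonneg (abs_nonneg (g p₀)) hR]

lemma tendsto_mul_sq_sub_mul_add_one_atTop {c : ℝ} (hc : 0 < c) (C : ℝ) :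
    Tendsto (fun M : ℝ ↦ c * M ^ 2 - C * (M + 1)) atTop atTop := by
  have hlin : Tendsto (fun M : ℝ ↦ c * M + -C) atTop atTop :=
    tendsto_atTop_add_const_right _ _ (tendsto_id.const_mul_atTop hc)
  refine (tendsto_atTop_add_const_right _ (-C) (tendsto_id.atTop_mul_atTop₀ hlin)).congr fun M ↦ ?_
  simp only [id]; ring

section PairCorner

variable {ι : Type*} [DecidableEq ι]

def pairCorner (s t : ι) (M : ℝ) : ι → ℝ := fun u ↦ if u = s ∨ u = t then M else 0

lemma pairCorner_nonneg (s t : ι) {M : ℝ} (hM : 0 ≤ M) (u : ι) : 0 ≤ pairCorner s t M u := by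
  unfold pairCorner; split_ifs <;> simp [hM]

end PairCorner

section ExpGraphicalModel

variable {ι : Type*} [Fintype ι] [LinearOrder ι] [LocallyFiniteOrderTop ι]

lemma sum_Ioi_eq_sum_filter_lt {β : Type*} [AddCommMonoid β] (f : ι → ι → β) :
    ∑ u, ∑ v ∈ Ioi u, f u v = ∑ q ∈ univ.filter (fun q : ι × ι ↦ q.1 < q.2), f q.1 q.2 :=
  (sum_finset_product' _ _ _ (by simp)).symm

lemma sum_Ioi_mul_le {θ₂ : ι → ι → ℝ} {x : ι → ℝ} {s t : ι} (hst : s < t) (hneg : θ₂ s t ≤ 0)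
    {m R : ℝ} (hR : 0 ≤ R) (hm : m ≤ x s * x t)
    (hx : ∀ u v, u < v → (u, v) ≠ (s, t) → |x u * x v| ≤ R) :
    ∑ u, ∑ v ∈ Ioi u, θ₂ u v * x u * x v ≤
      θ₂ s t * m + (∑ u, ∑ v ∈ Ioi u, |θ₂ u v|) * R := by
  simp_rw [mul_assoc, sum_Ioi_eq_sum_filter_lt]
  exact sum_mul_le_mul_add_sum_abs_mul (p₀ := (s, t)) (by simpa using hst) hneg hm hR
    fun q hq hne ↦ hx q.1 q.2 (by simpa using hq) hne

noncomputable def expGraphicalDensity (θ : ι → ℝ) (θ₂ : ι → ι → ℝ) (x : ι → ℝ) : ℝ :=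
  Real.exp (-∑ s, θ s * x s - ∑ s, ∑ t ∈ Ioi s, θ₂ s t * x s * x t)

variable {θ : ι → ℝ} {θ₂ : ι → ι → ℝ}

lemma expGraphicalDensity_le_prod (hθ₂ : ∀ s t, s < t → 0 ≤ θ₂ s t) {x : ι → ℝ}
    (hx : ∀ i, 0 ≤ x i) : expGraphicalDensity θ θ₂ x ≤ ∏ i, Real.exp (-(θ i * x i)) := by
  have hQ : 0 ≤ ∑ s, ∑ t ∈ Ioi s, θ₂ s t * x s * x t :=
    sum_nonneg fun s _ ↦ sum_nonneg fun t ht ↦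
      mul_nonneg (mul_nonneg (hθ₂ s t (mem_Ioi.1 ht)) (hx s)) (hx t)
  rw [expGraphicalDensity, ← Real.exp_sum, sum_neg_distrib]
  exact Real.exp_le_exp.2 (by linarith)

theorem lintegral_expGraphicalDensity_le_prod_inv (hθ : ∀ s, 0 < θ s)
    (hθ₂ : ∀ s t, s < t → 0 ≤ θ₂ s t) :
    ∫⁻ x in {x : ι → ℝ | ∀ i, 0 ≤ x i}, ENNReal.ofReal (expGraphicalDensity θ θ₂ x) ≤
      ENNReal.ofReal (∏ s, 1 / θ s) := calc
  _ ≤ ∫⁻ x in {x : ι → ℝ | ∀ i, 0 ≤ x i}, ENNReal.ofReal (∏ i, Real.exp (-(θ i * x i))) :=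
      setLIntegral_mono (by fun_prop) fun _ hx ↦
        ENNReal.ofReal_le_ofReal (expGraphicalDensity_le_prod hθ₂ hx)
  _ = ENNReal.ofReal (∏ i, ∫ y in Set.Ici 0, Real.exp (-(θ i * y))) := by
      rw [volume_restrict_nonneg_orthant]
      exact lintegral_pi_ofReal_prod (fun i ↦ integrableOn_exp_neg_mul_Ici (hθ i))
        fun _ _ ↦ (Real.exp_pos _).le
  _ = ENNReal.ofReal (∏ s, 1 / θ s) := by simp_rw [integral_exp_neg_mul_Ici (hθ _)]

lemma exp_le_expGraphicalDensity {s t : ι} (hst : s < t) (hneg : θ₂ s t ≤ 0) {M : ℝ}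
    (hM : 0 ≤ M) {x : ι → ℝ} (hx : x ∈ Set.Icc (pairCorner s t M) (pairCorner s t M + 1)) :
    Real.exp (-θ₂ s t * M ^ 2 - (∑ u, |θ u| + ∑ u, ∑ v ∈ Ioi u, |θ₂ u v|) * (M + 1)) ≤
      expGraphicalDensity θ θ₂ x := by
  have hlo (u) : pairCorner s t M u ≤ x u := hx.1 u
  have hhi (u) : x u ≤ pairCorner s t M u + 1 := hx.2 u
  have hx₀ (u) : 0 ≤ x u := by
    have := hlo u; unfold pairCorner at this; split_ifs at this <;> linarith
  have hxR (u) : |x u| ≤ M + 1 := by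
    have := hhi u; unfold pairCorner at this
    rw [abs_of_nonneg (hx₀ u)]; split_ifs at this <;> linarith
  have hx₁ (u) (hus : u ≠ s) (hut : u ≠ t) : |x u| ≤ 1 := by
    have := hhi u
    rw [pairCorner, if_neg (by tauto)] at this
    rw [abs_of_nonneg (hx₀ u)]; linarith
  have hxst : M ^ 2 ≤ x s * x t := by
    have hs := hlo s; have ht := hlo t; unfold pairCorner at hs ht
    rw [if_pos (Or.inl rfl)] at hs; rw [if_pos (Or.inr rfl)] at ht; nlinarith
  have hpair (u v) (huv : u < v) (hne : (u, v) ≠ (s, t)) : |x u * x v| ≤ M + 1 := by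
    rw [abs_mul]
    rcases (by grind : (u ≠ s ∧ u ≠ t) ∨ (v ≠ s ∧ v ≠ t)) with ⟨hus, hut⟩ | ⟨hvs, hvt⟩
    · nlinarith [hx₁ u hus hut, hxR v, abs_nonneg (x u), abs_nonneg (x v)]
    · nlinarith [hx₁ v hvs hvt, hxR u, abs_nonneg (x u), abs_nonneg (x v)]
  have hlin := sum_mul_le_sum_abs_mul (P := univ) (g := θ) fun u _ ↦ hxR u
  have hquad := sum_Ioi_mul_le hst hneg (by linarith) hxst hpair
  rw [expGraphicalDensity]
  exact Real.exp_le_exp.2 (by linarith)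

theorem lintegral_expGraphicalDensity_eq_top {s t : ι} (hst : s < t) (hneg : θ₂ s t < 0) :
    ∫⁻ x in {x : ι → ℝ | ∀ i, 0 ≤ x i}, ENNReal.ofReal (expGraphicalDensity θ θ₂ x) = ⊤ := by
  set C := ∑ u, |θ u| + ∑ u, ∑ v ∈ Ioi u, |θ₂ u v|
  have hlow (M : ℝ) (hM : 0 ≤ M) : ENNReal.ofReal (Real.exp (-θ₂ s t * M ^ 2 - C * (M + 1))) ≤
      ∫⁻ x in {x : ι → ℝ | ∀ i, 0 ≤ x i}, ENNReal.ofReal (expGraphicalDensity θ θ₂ x) := by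
    set B := Set.Icc (pairCorner s t M) (pairCorner s t M + 1)
    have hB : B ⊆ {x | ∀ i, 0 ≤ x i} := fun x hx u ↦ (pairCorner_nonneg s t hM u).trans (hx.1 u)
    calc ENNReal.ofReal (Real.exp (-θ₂ s t * M ^ 2 - C * (M + 1)))
        = ∫⁻ _ in B, ENNReal.ofReal (Real.exp (-θ₂ s t * M ^ 2 - C * (M + 1))) := by
          rw [setLIntegral_const, Real.volume_Icc_pi]; simp
      _ ≤ ∫⁻ x in B, ENNReal.ofReal (expGraphicalDensity θ θ₂ x) :=
          setLIntegral_mono' measurableSet_Icc fun _ hx ↦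
            ENNReal.ofReal_le_ofReal (exp_le_expGraphicalDensity hst hneg.le hM hx)
      _ ≤ _ := lintegral_mono_set hB
  have htend := ENNReal.tendsto_ofReal_atTop.comp <| Real.tendsto_exp_atTop.comp <|
    tendsto_mul_sq_sub_mul_add_one_atTop (neg_pos.2 hneg) C
  exact top_unique (le_of_tendsto htend ((eventually_ge_atTop 0).mono hlow))

end ExpGraphicalModel

theorem exponential_graphical_model_normalizability_general
    {p : ℕ} (θ : Fin p → ℝ) (θ₂ : Fin p → Fin p → ℝ)
    (I : ℝ≥0∞)
    (hI : I = ∫⁻ x in {x : Fin p → ℝ | ∀ s, 0 ≤ x s},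
      ENNReal.ofReal (Real.exp (-∑ s, θ s * x s -
        ∑ s, ∑ t ∈ Finset.Ioi s, θ₂ s t * x s * x t)) ∂volume) :
    ((∀ s, 0 < θ s) → (∀ s t, s < t → 0 ≤ θ₂ s t) →
      I ≤ ENNReal.ofReal (∏ s, 1 / θ s) ∧ I ≠ ⊤) ∧
    ((∃ s t, s < t ∧ θ₂ s t < 0) → I = ⊤) := by
  subst hI
  refine ⟨fun hθ hθ₂ ↦ ?_, fun ⟨_, _, hst, hneg⟩ ↦ lintegral_expGraphicalDensity_eq_top hst hneg⟩
  have hle := lintegral_expGraphicalDensity_le_prod_inv hθ hθ₂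
  exact ⟨hle, ne_top_of_le_ne_top ENNReal.ofReal_ne_top hle⟩

/-- Normalizability of the exponential graphical model: for
`I = ∫_{[0,∞)^p} exp(-Σ_s θ_s x_s - Σ_{s<t} θ_{st} x_s x_t) dx`,
(i) if all `θ_s > 0` and all `θ_{st} ≥ 0` (for `s < t`) then
`I ≤ Π_s (1/θ_s) < ∞`, and (ii) if some `θ_{st} < 0` then `I = +∞`. -/
theorem exponential_graphical_model_normalizability
    {p : ℕ} (hp : 2 ≤ p) (θ : Fin p → ℝ) (θ₂ : Fin p → Fin p → ℝ)
    (I : ℝ≥0∞)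
    (hI : I = ∫⁻ x in {x : Fin p → ℝ | ∀ s, 0 ≤ x s},
      ENNReal.ofReal (Real.exp (-∑ s, θ s * x s -
        ∑ s, ∑ t ∈ Finset.Ioi s, θ₂ s t * x s * x t)) ∂volume) :
    ((∀ s, 0 < θ s) → (∀ s t, s < t → 0 ≤ θ₂ s t) →
      I ≤ ENNReal.ofReal (∏ s, 1 / θ s) ∧ I ≠ ⊤) ∧
    ((∃ s t, s < t ∧ θ₂ s t < 0) → I = ⊤) :=
  exponential_graphical_model_normalizability_general θ θ₂ I hI
end

section
/- Let 𝒳 ⊆ ℝ with 0 ∈ 𝒳, let B, C : 𝒳 → ℝ with B nonconstant on 𝒳, and let G_1, G_2 : 𝒳 → ℝ, G_{12} : 𝒳² → ℝ, E_1, E_2 : 𝒳 → ℝ be functions such that for all x, y ∈ 𝒳: (i) x·G_1(x) + x·y·G_{12}(x,y) = E_1(y)(B(x) − B(0)) + C(x) − C(0), and (ii) y·G_2(y) + x·y·G_{12}(x,y) = E_2(x)(B(y) − B(0)) + C(y) − C(0). Then there exists θ ∈ ℝ such that x·y·G_{12}(x,y) = θ (B(x) − B(0))(B(y) − B(0)) for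 all x, y ∈ 𝒳. -/
/-- Pairwise case of the Besag-style functional-equation argument: the pairwise
factor `x·y·G₁₂(x,y)` is necessarily a scalar multiple of the tensor product of
centered sufficient statistics `(B x - B 0)(B y - B 0)`. -/
theorem besag_pairwise_factorization
    (𝒳 : Set ℝ) (h0 : (0 : ℝ) ∈ 𝒳)
    (B C : ℝ → ℝ)
    (hBnonconst : ∃ x ∈ 𝒳, ∃ y ∈ 𝒳, B x ≠ B y)
    (G₁ G₂ : ℝ → ℝ) (G₁₂ : ℝ → ℝ → ℝ) (E₁ E₂ : ℝ → ℝ)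
    (h₁ : ∀ x ∈ 𝒳, ∀ y ∈ 𝒳,
      x * G₁ x + x * y * G₁₂ x y = E₁ y * (B x - B 0) + (C x - C 0))
    (h₂ : ∀ x ∈ 𝒳, ∀ y ∈ 𝒳,
      y * G₂ y + x * y * G₁₂ x y = E₂ x * (B y - B 0) + (C y - C 0)) :
    ∃ θ : ℝ, ∀ x ∈ 𝒳, ∀ y ∈ 𝒳,
      x * y * G₁₂ x y = θ * (B x - B 0) * (B y - B 0) := by
  -- From (i): subtracting the case y = 0 gives the first product form.
  have key1 : ∀ x ∈ 𝒳, ∀ y ∈ 𝒳,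
      x * y * G₁₂ x y = (E₁ y - E₁ 0) * (B x - B 0) := by
    intro x hx y hy
    have ha := h₁ x hx y hy
    have hb := h₁ x hx 0 h0
    simp only [mul_zero, zero_mul] at hb
    nlinarith [ha, hb]
  have key2 : ∀ x ∈ 𝒳, ∀ y ∈ 𝒳,
      x * y * G₁₂ x y = (E₂ x - E₂ 0) * (B y - B 0) := by
    intro x hx y hy
    have ha := h₂ x hx y hy
    have hb := h₂ 0 h0 y hy
    simp only [mul_zero, zero_mul] at hb
    nlinarith [ha, hb]
  -- pick a with B a ≠ B 0
  obtain ⟨u, hu, v, hv, huv⟩ := hBnonconst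
  obtain ⟨a, ha, hBa⟩ : ∃ a ∈ 𝒳, B a ≠ B 0 := by
    by_cases h : B u = B 0
    · exact ⟨v, hv, fun hc => huv (h.trans hc.symm)⟩
    · exact ⟨u, hu, h⟩
  refine ⟨(E₂ a - E₂ 0) / (B a - B 0), ?_⟩
  intro x hx y hy
  have hne : B a - B 0 ≠ 0 := sub_ne_zero.mpr hBa
  have e1 : (E₁ y - E₁ 0) * (B a - B 0) = (E₂ a - E₂ 0) * (B y - B 0) := by
    rw [← key1 a ha y hy, key2 a ha y hy]
  rw [key1 x hx y hy]
  field_simp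
  linear_combination (B x - B 0) * e1
end

section
/- Let 𝒳 ⊆ ℝ with 0 ∈ 𝒳, let B, C : 𝒳 → ℝ with B nonconstant on 𝒳, and let G_1, G_2, G_3 : 𝒳 → ℝ, G_{12}, G_{13}, G_{23} : 𝒳² → ℝ, G_{123} : 𝒳³ → ℝ, and E_1, E_2, E_3 : 𝒳² → ℝ be functions such that for all x, y, u ∈ 𝒳: (i) x·G_1(x) + x·y·G_{12}(x,y) + x·u·G_{13}(x,u) + x·y·u·G_{123}(x,y,u) = E_1(y,u)(B(x) − B(0)) + C(x) − C(0); (ii) y·G_2(y) + x·y·G_{12}(x,y) + y·u·G_{23}(y,u) + x·y·u·G_{123}(x,y,u) = E_2(x,u)(B(y) − B(0)) + C(y) − C(0); (iii) u·G_3(u) + x·u·G_{13}(x,u) + y·u·G_{23}(y,u) + x·y·u·G_{123}(x,y,u) = E_3(x,y)(B(u) − B(0)) + C(u) − C(0). Then there exists θ ∈ ℝ such that x·y·u·G_{123}(x,y,u) = θ (B(x) − B(0))(B(y) − B(0))(B(u) − B(0)) for all x, y, u ∈ 𝒳. -/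
/-!
Write `T x y u = x y u G₁₂₃(x,y,u)` and `b x = B x - B 0`. Taking the mixed second difference of
equation (i) in `(y, u)` at `0` kills every term depending on at most one of `y, u`, and `T` vanishes
when `y = 0` or `u = 0`; so `T x y u` is `b x` times a function of `(y, u)`. Likewise (ii) and (iii)
make `T` a multiple of `b y` and of `b u`. Fixing a point `a` with `b a ≠ 0` and moving the three
arguments to `a` one at a time gives `T = (T a a a / (b a)³) · b ⊗ b ⊗ b`.
-/

def mixedDiff {R M : Type*} [Zero R] [AddGroup M] (e : R → R → M) (y u : R) : M :=
  e y u - e y 0 - e 0 u + e 0 0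

section Proportional

variable {K α : Type*} [Field K] {S : Set α} {b : α → K} {a : α}

theorem eq_div_mul_of_forall_eq_mul (ha : a ∈ S) (hba : b a ≠ 0) {F : α → K} {c : K}
    (h : ∀ x ∈ S, F x = c * b x) : ∀ x ∈ S, F x = F a / b a * b x := by
  intro x hx
  rw [h x hx, h a ha, mul_div_cancel_right₀ _ hba]

theorem exists_eq_mul_mul_mul_of_forall_eq_mul (ha : a ∈ S) (hba : b a ≠ 0)
    {T : α → α → α → K} {f₁ f₂ f₃ : α → α → K}
    (h₁ : ∀ x ∈ S, ∀ y ∈ S, ∀ u ∈ S, T x y u = f₁ y u * b x)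
    (h₂ : ∀ x ∈ S, ∀ y ∈ S, ∀ u ∈ S, T x y u = f₂ x u * b y)
    (h₃ : ∀ x ∈ S, ∀ y ∈ S, ∀ u ∈ S, T x y u = f₃ x y * b u) :
    ∃ θ : K, ∀ x ∈ S, ∀ y ∈ S, ∀ u ∈ S, T x y u = θ * b x * b y * b u := by
  refine ⟨T a a a / b a ^ 3, fun x hx y hy u hu => ?_⟩
  have hx' := eq_div_mul_of_forall_eq_mul ha hba (fun x hx => h₁ x hx y hy u hu) x hx
  have hy' := eq_div_mul_of_forall_eq_mul ha hba (fun y hy => h₂ a ha y hy u hu) y hy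
  have hu' := eq_div_mul_of_forall_eq_mul ha hba (fun u hu => h₃ a ha a ha u hu) u hu
  rw [hx', hy', hu']
  field_simp

end Proportional

/-- Third-order case of the Besag-style functional-equation argument: the
triple-wise factor `x·y·u·G₁₂₃(x,y,u)` is necessarily a scalar multiple of the
tensor product of centered sufficient statistics
`(B x - B 0)(B y - B 0)(B u - B 0)`. -/
theorem besag_triplewise_factorization
    (𝒳 : Set ℝ) (h0 : (0 : ℝ) ∈ 𝒳)
    (B C : ℝ → ℝ)
    (hBnonconst : ∃ x ∈ 𝒳, ∃ y ∈ 𝒳, B x ≠ B y)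
    (G₁ G₂ G₃ : ℝ → ℝ) (G₁₂ G₁₃ G₂₃ : ℝ → ℝ → ℝ) (G₁₂₃ : ℝ → ℝ → ℝ → ℝ)
    (E₁ E₂ E₃ : ℝ → ℝ → ℝ)
    (h₁ : ∀ x ∈ 𝒳, ∀ y ∈ 𝒳, ∀ u ∈ 𝒳,
      x * G₁ x + x * y * G₁₂ x y + x * u * G₁₃ x u + x * y * u * G₁₂₃ x y u =
        E₁ y u * (B x - B 0) + (C x - C 0))
    (h₂ : ∀ x ∈ 𝒳, ∀ y ∈ 𝒳, ∀ u ∈ 𝒳,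
      y * G₂ y + x * y * G₁₂ x y + y * u * G₂₃ y u + x * y * u * G₁₂₃ x y u =
        E₂ x u * (B y - B 0) + (C y - C 0))
    (h₃ : ∀ x ∈ 𝒳, ∀ y ∈ 𝒳, ∀ u ∈ 𝒳,
      u * G₃ u + x * u * G₁₃ x u + y * u * G₂₃ y u + x * y * u * G₁₂₃ x y u =
        E₃ x y * (B u - B 0) + (C u - C 0)) :
    ∃ θ : ℝ, ∀ x ∈ 𝒳, ∀ y ∈ 𝒳, ∀ u ∈ 𝒳,
      x * y * u * G₁₂₃ x y u = θ * (B x - B 0) * (B y - B 0) * (B u - B 0) := by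
  obtain ⟨p, hp, q, hq, hpq⟩ := hBnonconst
  obtain ⟨a, ha, hBa⟩ : ∃ a ∈ 𝒳, B a - B 0 ≠ 0 := by
    by_contra! h
    exact hpq (by linarith [h p hp, h q hq])
  refine exists_eq_mul_mul_mul_of_forall_eq_mul (T := fun x y u => x * y * u * G₁₂₃ x y u)
    (b := fun x => B x - B 0) ha hBa (f₁ := mixedDiff E₁) (f₂ := mixedDiff E₂)
    (f₃ := mixedDiff E₃) ?_ ?_ ?_
  · intro x hx y hy u hu
    unfold mixedDiff
    linear_combination h₁ x hx y hy u hu - h₁ x hx y hy 0 h0 - h₁ x hx 0 h0 u hu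
      + h₁ x hx 0 h0 0 h0
  · intro x hx y hy u hu
    unfold mixedDiff
    linear_combination h₂ x hx y hy u hu - h₂ x hx y hy 0 h0 - h₂ 0 h0 y hy u hu
      + h₂ 0 h0 y hy 0 h0
  · intro x hx y hy u hu
    unfold mixedDiff
    linear_combination h₃ x hx y hy u hu - h₃ x hx 0 h0 u hu - h₃ 0 h0 y hy u hu
      + h₃ 0 h0 0 h0 u hu
end
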